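/- Let n ≥ 4 and k ≥ 1, let PC, CW, CA be binary predicates, and let a_0, …, a_n, b_1, …, b_{n·k}, c_1, …, c_{n·k}, d_1, …, d_k be pairwise distinct constants. Let r be the rule PC(x,y) ← CW(x,z₁), CA(x,z₂), PC(z₁,y), PC(z₂,y), and let E = {CW(a_i, b_{i·k+j}) | 0 ≤ i < n, 1 ≤ j ≤ k} ∪ {CA(a_i, c_{i·k+j}) | 0 ≤ i < n, 1 ≤ j ≤ k} ∪ {CW(a_n, a_2), CA(a_n, a_3)} ∪ {PC(b_{i·k+j}, d_j) | 0 ≤ i < n, 1 ≤ j ≤ k} ∪ {PC(c_{i·k+j}, d_j) | 0 ≤ i < n, 1 ≤ j ≤ k}. Then mat({r}, E) = E ∪ { PC(a_i, d_j) | 0 ≤ i ≤ n, 1 ≤ j ≤ k }; in particular the materialisation contains exactly n·k + k facts not in E, the facts PC(a_i, d_j) with i < n being derived in the first round of rule application and the facts PC(a_n, d_j) in the second. -/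
import Mathlib


namespace Datalog

/-- An atom `P(t₁,…,tₖ)`: a predicate symbol applied to a list of terms, where
`Sum.inl v` denotes the variable `v` and `Sum.inr c` denotes the constant `c`. -/
structure Atom where
  pred : ℕ
  args : List (ℕ ⊕ ℕ)
deriving DecidableEq

/-- A fact: a variable-free atom, i.e. a predicate applied to constants only. -/
structure Fact where
  pred : ℕ
  args : List ℕ
deriving DecidableEq

/-- Applying a substitution `σ` (a map from variables to constants) to an atom. -/
def Atom.subst (A : Atom) (σ : ℕ → ℕ) : Fact :=
  ⟨A.pred, A.args.map (Sum.elim σ id)⟩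

/-- The set of variables occurring in an atom. -/
def Atom.vars (A : Atom) : Set ℕ := { v | Sum.inl v ∈ A.args }

/-- A Datalog rule: a head atom and a finite set of body atoms, which is safe:
every variable of the head occurs in some body atom. -/
structure Rule where
  head : Atom
  body : Finset Atom
  safe : ∀ v ∈ head.vars, ∃ B ∈ body, v ∈ B.vars

/-- `r[I] = { h(rσ) | b(rσ) ⊆ I }`. -/
def Rule.eval (r : Rule) (I : Set Fact) : Set Fact :=
  { f | ∃ σ : ℕ → ℕ, (∀ B ∈ r.body, B.subst σ ∈ I) ∧ f = r.head.subst σ }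

/-- `r[I ∸ Δ] = { h(rσ) | b(rσ) ⊆ I and b(rσ) ∩ Δ ≠ ∅ }`. -/
def Rule.evalDelta (r : Rule) (I Δ : Set Fact) : Set Fact :=
  { f | ∃ σ : ℕ → ℕ, (∀ B ∈ r.body, B.subst σ ∈ I) ∧
        (∃ B ∈ r.body, B.subst σ ∈ Δ) ∧ f = r.head.subst σ }

/-- `Π[I] = ⋃_{r ∈ Π} r[I]`. -/
def progEval (P : Set Rule) (I : Set Fact) : Set Fact := ⋃ r ∈ P, r.eval I

/-- `Π[I ∸ Δ] = ⋃_{r ∈ Π} r[I ∸ Δ]`. -/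
def progEvalDelta (P : Set Rule) (I Δ : Set Fact) : Set Fact := ⋃ r ∈ P, r.evalDelta I Δ

/-- `I_0 = E`, `I_{i+1} = I_i ∪ Π[I_i]`. -/
def matSeq (P : Set Rule) (E : Set Fact) : ℕ → Set Fact
  | 0 => E
  | n + 1 => matSeq P E n ∪ progEval P (matSeq P E n)

/-- The materialisation `mat(Π, E) = ⋃_{i ≥ 0} I_i`. -/
def mat (P : Set Rule) (E : Set Fact) : Set Fact := ⋃ n, matSeq P E n

/-- The fact `P(u, v)` for a binary predicate `P` and constants `u`, `v`. -/
def mk2 (P u v : ℕ) : Fact := ⟨P, [u, v]⟩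


theorem mk2_eq_iff {P u v P' u' v' : ℕ} :
    mk2 P u v = mk2 P' u' v' ↔ P = P' ∧ u = u' ∧ v = v' := by
  simp [mk2]

theorem mat_eq_of_fixed (P : Set Rule) (E : Set Fact) (m : ℕ)
    (h : progEval P (matSeq P E m) ⊆ matSeq P E m) : mat P E = matSeq P E m := by
  have hmono : Monotone (matSeq P E) :=
    monotone_nat_of_le_succ (fun t => Set.subset_union_left)
  have hstab : ∀ t, matSeq P E (m + t) = matSeq P E m := by
    intro t
    induction t with
    | zero => rfl
    | succ t ih =>
      show matSeq P E (m + t) ∪ progEval P (matSeq P E (m + t)) = _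
      rw [ih, Set.union_eq_self_of_subset_right h]
  apply Set.Subset.antisymm
  · apply Set.iUnion_subset
    intro t
    rcases le_total t m with h' | h'
    · exact hmono h'
    · rw [show t = m + (t - m) by omega, hstab]
  · exact Set.subset_iUnion _ m

theorem eval_char (pc cw ca x y z1 z2 : ℕ) (hxy : x ≠ y) (hxz1 : x ≠ z1) (hxz2 : x ≠ z2)
    (hyz1 : y ≠ z1) (hyz2 : y ≠ z2) (hz12 : z1 ≠ z2) (r : Rule)
    (hhead : r.head = ⟨pc, [Sum.inl x, Sum.inl y]⟩)
    (hbody : r.body = {(⟨cw, [Sum.inl x, Sum.inl z1]⟩ : Atom),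
                       ⟨ca, [Sum.inl x, Sum.inl z2]⟩,
                       ⟨pc, [Sum.inl z1, Sum.inl y]⟩,
                       ⟨pc, [Sum.inl z2, Sum.inl y]⟩})
    (I : Set Fact) :
    r.eval I = { f | ∃ u v w1 w2, mk2 cw u w1 ∈ I ∧ mk2 ca u w2 ∈ I ∧
      mk2 pc w1 v ∈ I ∧ mk2 pc w2 v ∈ I ∧ f = mk2 pc u v } := by
  ext f
  simp only [Rule.eval, Set.mem_setOf_eq, hhead, hbody]
  constructor
  · rintro ⟨σ, hb, rfl⟩
    refine ⟨σ x, σ y, σ z1, σ z2, ?_, ?_, ?_, ?_, rfl⟩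
    · exact hb ⟨cw, [Sum.inl x, Sum.inl z1]⟩ (by simp)
    · exact hb ⟨ca, [Sum.inl x, Sum.inl z2]⟩ (by simp)
    · exact hb ⟨pc, [Sum.inl z1, Sum.inl y]⟩ (by simp)
    · exact hb ⟨pc, [Sum.inl z2, Sum.inl y]⟩ (by simp)
  · rintro ⟨u, v, w1, w2, h1, h2, h3, h4, rfl⟩
    refine ⟨fun w => if w = x then u else if w = y then v else if w = z1 then w1 else w2,
      ?_, ?_⟩
    · intro B hB
      simp only [Finset.mem_insert, Finset.mem_singleton] at hB
      rcases hB with rfl | rfl | rfl | rfl <;>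
        simpa [Atom.subst, mk2, Ne.symm hxy, Ne.symm hxz1, Ne.symm hxz2, Ne.symm hyz1,
          Ne.symm hyz2, Ne.symm hz12, hxy, hxz1, hxz2, hyz1, hyz2, hz12] using
          (by assumption : _ ∈ I)
    · simp [Atom.subst, mk2, Ne.symm hxy]
/-- the materialisation of the running example is
`E ∪ { PC(a_i, d_j) | 0 ≤ i ≤ n, 1 ≤ j ≤ k }`; in particular it contains exactly
`n·k + k` facts not in `E`, the facts `PC(a_i, d_j)` with `i < n` being derived
in the first round of rule application and the facts `PC(a_n, d_j)` in the
second. -/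
theorem running_example_materialisation
    (n k : ℕ) (hn : 4 ≤ n) (hk : 1 ≤ k)
    (pc cw ca : ℕ) (hp1 : pc ≠ cw) (hp2 : pc ≠ ca) (hp3 : cw ≠ ca)
    (x y z1 z2 : ℕ) (hxy : x ≠ y) (hxz1 : x ≠ z1) (hxz2 : x ≠ z2)
    (hyz1 : y ≠ z1) (hyz2 : y ≠ z2) (hz12 : z1 ≠ z2)
    (a b c d : ℕ → ℕ)
    (hinj : Set.InjOn (Sum.elim (Sum.elim a b) (Sum.elim c d))
      ({ q : (ℕ ⊕ ℕ) ⊕ (ℕ ⊕ ℕ) | ∃ i ≤ n, q = Sum.inl (Sum.inl i) } ∪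
       { q | ∃ j, 1 ≤ j ∧ j ≤ n * k ∧ q = Sum.inl (Sum.inr j) } ∪
       { q | ∃ j, 1 ≤ j ∧ j ≤ n * k ∧ q = Sum.inr (Sum.inl j) } ∪
       { q | ∃ j, 1 ≤ j ∧ j ≤ k ∧ q = Sum.inr (Sum.inr j) }))
    (r : Rule)
    (hhead : r.head = ⟨pc, [Sum.inl x, Sum.inl y]⟩)
    (hbody : r.body = {(⟨cw, [Sum.inl x, Sum.inl z1]⟩ : Atom),
                       ⟨ca, [Sum.inl x, Sum.inl z2]⟩,
                       ⟨pc, [Sum.inl z1, Sum.inl y]⟩,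
                       ⟨pc, [Sum.inl z2, Sum.inl y]⟩})
    (E : Set Fact)
    (hE : E = { f | ∃ i j, i < n ∧ 1 ≤ j ∧ j ≤ k ∧ f = mk2 cw (a i) (b (i * k + j)) } ∪
              { f | ∃ i j, i < n ∧ 1 ≤ j ∧ j ≤ k ∧ f = mk2 ca (a i) (c (i * k + j)) } ∪
              {mk2 cw (a n) (a 2), mk2 ca (a n) (a 3)} ∪
              { f | ∃ i j, i < n ∧ 1 ≤ j ∧ j ≤ k ∧ f = mk2 pc (b (i * k + j)) (d j) } ∪
              { f | ∃ i j, i < n ∧ 1 ≤ j ∧ j ≤ k ∧ f = mk2 pc (c (i * k + j)) (d j) }) :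
    mat {r} E = E ∪ { f | ∃ i j, i ≤ n ∧ 1 ≤ j ∧ j ≤ k ∧ f = mk2 pc (a i) (d j) } ∧
    (mat {r} E \ E).ncard = n * k + k ∧
    matSeq {r} E 1 = E ∪ { f | ∃ i j, i < n ∧ 1 ≤ j ∧ j ≤ k ∧ f = mk2 pc (a i) (d j) } ∧
    matSeq {r} E 2 = mat {r} E := by
  -- Injectivity helpers
  have mema : ∀ i, i ≤ n → (Sum.inl (Sum.inl i) : (ℕ ⊕ ℕ) ⊕ (ℕ ⊕ ℕ)) ∈
      ({ q : (ℕ ⊕ ℕ) ⊕ (ℕ ⊕ ℕ) | ∃ i ≤ n, q = Sum.inl (Sum.inl i) } ∪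
       { q | ∃ j, 1 ≤ j ∧ j ≤ n * k ∧ q = Sum.inl (Sum.inr j) } ∪
       { q | ∃ j, 1 ≤ j ∧ j ≤ n * k ∧ q = Sum.inr (Sum.inl j) } ∪
       { q | ∃ j, 1 ≤ j ∧ j ≤ k ∧ q = Sum.inr (Sum.inr j) }) := by
    intro i hi
    simp only [Set.mem_union, Set.mem_setOf_eq]
    exact Or.inl (Or.inl (Or.inl ⟨i, hi, rfl⟩))
  have memb : ∀ m, 1 ≤ m → m ≤ n * k → (Sum.inl (Sum.inr m) : (ℕ ⊕ ℕ) ⊕ (ℕ ⊕ ℕ)) ∈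
      ({ q : (ℕ ⊕ ℕ) ⊕ (ℕ ⊕ ℕ) | ∃ i ≤ n, q = Sum.inl (Sum.inl i) } ∪
       { q | ∃ j, 1 ≤ j ∧ j ≤ n * k ∧ q = Sum.inl (Sum.inr j) } ∪
       { q | ∃ j, 1 ≤ j ∧ j ≤ n * k ∧ q = Sum.inr (Sum.inl j) } ∪
       { q | ∃ j, 1 ≤ j ∧ j ≤ k ∧ q = Sum.inr (Sum.inr j) }) := by
    intro m h1 h2
    simp only [Set.mem_union, Set.mem_setOf_eq]
    exact Or.inl (Or.inl (Or.inr ⟨m, h1, h2, rfl⟩))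
  have memc : ∀ m, 1 ≤ m → m ≤ n * k → (Sum.inr (Sum.inl m) : (ℕ ⊕ ℕ) ⊕ (ℕ ⊕ ℕ)) ∈
      ({ q : (ℕ ⊕ ℕ) ⊕ (ℕ ⊕ ℕ) | ∃ i ≤ n, q = Sum.inl (Sum.inl i) } ∪
       { q | ∃ j, 1 ≤ j ∧ j ≤ n * k ∧ q = Sum.inl (Sum.inr j) } ∪
       { q | ∃ j, 1 ≤ j ∧ j ≤ n * k ∧ q = Sum.inr (Sum.inl j) } ∪
       { q | ∃ j, 1 ≤ j ∧ j ≤ k ∧ q = Sum.inr (Sum.inr j) }) := by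
    intro m h1 h2
    simp only [Set.mem_union, Set.mem_setOf_eq]
    exact Or.inl (Or.inr ⟨m, h1, h2, rfl⟩)
  have memd : ∀ j, 1 ≤ j → j ≤ k → (Sum.inr (Sum.inr j) : (ℕ ⊕ ℕ) ⊕ (ℕ ⊕ ℕ)) ∈
      ({ q : (ℕ ⊕ ℕ) ⊕ (ℕ ⊕ ℕ) | ∃ i ≤ n, q = Sum.inl (Sum.inl i) } ∪
       { q | ∃ j, 1 ≤ j ∧ j ≤ n * k ∧ q = Sum.inl (Sum.inr j) } ∪
       { q | ∃ j, 1 ≤ j ∧ j ≤ n * k ∧ q = Sum.inr (Sum.inl j) } ∪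
       { q | ∃ j, 1 ≤ j ∧ j ≤ k ∧ q = Sum.inr (Sum.inr j) }) := by
    intro j h1 h2
    simp only [Set.mem_union, Set.mem_setOf_eq]
    exact Or.inr ⟨j, h1, h2, rfl⟩
  have haa : ∀ i i', i ≤ n → i' ≤ n → a i = a i' → i = i' := by
    intro i i' hi hi' h
    simpa using hinj (mema i hi) (mema i' hi') (by simpa using h)
  have hab : ∀ i m, i ≤ n → 1 ≤ m → m ≤ n * k → a i ≠ b m := by
    intro i m hi h1 h2 h
    simpa using hinj (mema i hi) (memb m h1 h2) (by simpa using h)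
  have hac : ∀ i m, i ≤ n → 1 ≤ m → m ≤ n * k → a i ≠ c m := by
    intro i m hi h1 h2 h
    simpa using hinj (mema i hi) (memc m h1 h2) (by simpa using h)
  have hdd : ∀ j j', 1 ≤ j → j ≤ k → 1 ≤ j' → j' ≤ k → d j = d j' → j = j' := by
    intro j j' h1 h2 h1' h2' h
    simpa using hinj (memd j h1 h2) (memd j' h1' h2') (by simpa using h)
  have hm : ∀ i j, i < n → 1 ≤ j → j ≤ k → 1 ≤ i * k + j ∧ i * k + j ≤ n * k := by
    intro i j hi hj hjk
    refine ⟨le_trans hj (Nat.le_add_left j _), ?_⟩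
    calc i * k + j ≤ i * k + k := Nat.add_le_add_left hjk _
      _ = (i + 1) * k := by ring
      _ ≤ n * k := Nat.mul_le_mul_right _ hi
  -- Membership characterizations
  have hCW : ∀ u w, mk2 cw u w ∈ E ↔
      (∃ i j, i < n ∧ 1 ≤ j ∧ j ≤ k ∧ u = a i ∧ w = b (i * k + j)) ∨ (u = a n ∧ w = a 2) := by
    intro u w
    rw [hE]
    simp only [Set.mem_union, Set.mem_setOf_eq, Set.mem_insert_iff, Set.mem_singleton_iff,
      mk2_eq_iff, eq_self_iff_true, true_and, hp3, Ne.symm hp1, false_and, and_false,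
      exists_false, or_false, false_or]
  have hCA : ∀ u w, mk2 ca u w ∈ E ↔
      (∃ i j, i < n ∧ 1 ≤ j ∧ j ≤ k ∧ u = a i ∧ w = c (i * k + j)) ∨ (u = a n ∧ w = a 3) := by
    intro u w
    rw [hE]
    simp only [Set.mem_union, Set.mem_setOf_eq, Set.mem_insert_iff, Set.mem_singleton_iff,
      mk2_eq_iff, eq_self_iff_true, true_and, Ne.symm hp3, Ne.symm hp2, false_and, and_false,
      exists_false, or_false, false_or]
  have hPCE : ∀ u v, mk2 pc u v ∈ E ↔
      (∃ i j, i < n ∧ 1 ≤ j ∧ j ≤ k ∧ u = b (i * k + j) ∧ v = d j) ∨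
      (∃ i j, i < n ∧ 1 ≤ j ∧ j ≤ k ∧ u = c (i * k + j) ∧ v = d j) := by
    intro u v
    rw [hE]
    simp only [Set.mem_union, Set.mem_setOf_eq, Set.mem_insert_iff, Set.mem_singleton_iff,
      mk2_eq_iff, eq_self_iff_true, true_and, hp1, hp2, false_and, and_false,
      exists_false, or_false, false_or]
  have hevalr := eval_char pc cw ca x y z1 z2 hxy hxz1 hxz2 hyz1 hyz2 hz12 r hhead hbody
  -- the central step lemma
  have hstep : ∀ T : Set Fact,
      T ⊆ { f | ∃ i j, i ≤ n ∧ 1 ≤ j ∧ j ≤ k ∧ f = mk2 pc (a i) (d j) } →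
      r.eval (E ∪ T) ⊆ { f | ∃ i j, i < n ∧ 1 ≤ j ∧ j ≤ k ∧ f = mk2 pc (a i) (d j) } ∪
        { f | ∃ j, 1 ≤ j ∧ j ≤ k ∧ mk2 pc (a 2) (d j) ∈ T ∧ f = mk2 pc (a n) (d j) } := by
    intro T hT f hf
    rw [hevalr] at hf
    obtain ⟨u, v, w1, w2, hcw, -, hpc1, -, rfl⟩ := hf
    have hcwE : mk2 cw u w1 ∈ E := by
      rcases hcw with h | h
      · exact h
      · obtain ⟨i0, j0, -, -, -, heq⟩ := hT h
        exact absurd (mk2_eq_iff.mp heq).1.symm hp1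
    rw [hCW] at hcwE
    rcases hcwE with ⟨i, j1, hi, hj1, hj1k, rfl, rfl⟩ | ⟨rfl, rfl⟩
    · -- u = a i, w1 = b (i*k+j1)
      left
      rcases hpc1 with h | h
      · rw [hPCE] at h
        rcases h with ⟨i', j', hi', hj', hjk', -, rfl⟩ | ⟨i', j', hi', hj', hjk', -, rfl⟩
        · exact ⟨i, j', hi, hj', hjk', rfl⟩
        · exact ⟨i, j', hi, hj', hjk', rfl⟩
      · obtain ⟨i', j', hi', hj', hjk', heq⟩ := hT h
        obtain ⟨-, -, rfl⟩ := mk2_eq_iff.mp heq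
        exact ⟨i, j', hi, hj', hjk', rfl⟩
    · -- u = a n, w1 = a 2
      rcases hpc1 with h | h
      · rw [hPCE] at h
        rcases h with ⟨i', j', hi', hj', hjk', hbe, -⟩ | ⟨i', j', hi', hj', hjk', hbe, -⟩
        · exact absurd hbe
            (hab 2 _ (by omega) (hm i' j' hi' hj' hjk').1 (hm i' j' hi' hj' hjk').2)
        · exact absurd hbe
            (hac 2 _ (by omega) (hm i' j' hi' hj' hjk').1 (hm i' j' hi' hj' hjk').2)
      · obtain ⟨i', j', hi', hj', hjk', heq⟩ := hT h
        obtain ⟨-, -, rfl⟩ := mk2_eq_iff.mp heq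
        right
        exact ⟨j', hj', hjk', h, rfl⟩
  have hprog : ∀ I, progEval {r} I = r.eval I := by
    intro I; simp [progEval]
  have hS1subE : { f | ∃ i j, i < n ∧ 1 ≤ j ∧ j ≤ k ∧ f = mk2 pc (a i) (d j) } ⊆ r.eval E := by
    rintro f ⟨i, j, hi, hj, hjk, rfl⟩
    rw [hevalr]
    refine ⟨a i, d j, b (i * k + j), c (i * k + j), ?_, ?_, ?_, ?_, rfl⟩
    · rw [hCW]; exact Or.inl ⟨i, j, hi, hj, hjk, rfl, rfl⟩
    · rw [hCA]; exact Or.inl ⟨i, j, hi, hj, hjk, rfl, rfl⟩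
    · rw [hPCE]; exact Or.inl ⟨i, j, hi, hj, hjk, rfl, rfl⟩
    · rw [hPCE]; exact Or.inr ⟨i, j, hi, hj, hjk, rfl, rfl⟩
  have hevalE : r.eval E = { f | ∃ i j, i < n ∧ 1 ≤ j ∧ j ≤ k ∧ f = mk2 pc (a i) (d j) } := by
    apply subset_antisymm _ hS1subE
    intro f hf
    have h0 := hstep ∅ (Set.empty_subset _)
    rw [Set.union_empty] at h0
    rcases h0 hf with h | ⟨j, -, -, hmem, -⟩
    · exact h
    · exact absurd hmem (Set.notMem_empty _)
  have hI1 : matSeq {r} E 1 =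
      E ∪ { f | ∃ i j, i < n ∧ 1 ≤ j ∧ j ≤ k ∧ f = mk2 pc (a i) (d j) } := by
    show E ∪ progEval {r} E = _
    rw [hprog, hevalE]
  have hmonoeval : ∀ I J : Set Fact, I ⊆ J → r.eval I ⊆ r.eval J := by
    intro I J hIJ f hf
    obtain ⟨σ, hb, he⟩ := hf
    exact ⟨σ, fun B hB => hIJ (hb B hB), he⟩
  have hS1S2 : { f | ∃ i j, i < n ∧ 1 ≤ j ∧ j ≤ k ∧ f = mk2 pc (a i) (d j) } ⊆
      { f | ∃ i j, i ≤ n ∧ 1 ≤ j ∧ j ≤ k ∧ f = mk2 pc (a i) (d j) } := by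
    rintro f ⟨i, j, hi, hj, hjk, rfl⟩
    exact ⟨i, j, le_of_lt hi, hj, hjk, rfl⟩
  have hevalE1 : r.eval (E ∪ { f | ∃ i j, i < n ∧ 1 ≤ j ∧ j ≤ k ∧ f = mk2 pc (a i) (d j) }) =
      { f | ∃ i j, i ≤ n ∧ 1 ≤ j ∧ j ≤ k ∧ f = mk2 pc (a i) (d j) } := by
    apply subset_antisymm
    · intro f hf
      rcases hstep _ hS1S2 hf with ⟨i, j, hi, hj, hjk, rfl⟩ | ⟨j, hj, hjk, -, rfl⟩
      · exact ⟨i, j, le_of_lt hi, hj, hjk, rfl⟩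
      · exact ⟨n, j, le_refl n, hj, hjk, rfl⟩
    · rintro f ⟨i, j, hi, hj, hjk, rfl⟩
      rcases Nat.lt_or_ge i n with hlt | hge
      · exact hmonoeval E _ Set.subset_union_left (hS1subE ⟨i, j, hlt, hj, hjk, rfl⟩)
      · have hieq : i = n := le_antisymm hi hge
        subst hieq
        rw [hevalr]
        refine ⟨a i, d j, a 2, a 3, ?_, ?_, ?_, ?_, rfl⟩
        · apply Set.mem_union_left; rw [hCW]; exact Or.inr ⟨rfl, rfl⟩
        · apply Set.mem_union_left; rw [hCA]; exact Or.inr ⟨rfl, rfl⟩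
        · apply Set.mem_union_right; exact ⟨2, j, by omega, hj, hjk, rfl⟩
        · apply Set.mem_union_right; exact ⟨3, j, by omega, hj, hjk, rfl⟩
  have hI2 : matSeq {r} E 2 =
      E ∪ { f | ∃ i j, i ≤ n ∧ 1 ≤ j ∧ j ≤ k ∧ f = mk2 pc (a i) (d j) } := by
    show matSeq {r} E 1 ∪ progEval {r} (matSeq {r} E 1) = _
    rw [hI1, hprog, hevalE1, Set.union_assoc, Set.union_eq_self_of_subset_left hS1S2]
  have hfix : progEval {r} (matSeq {r} E 2) ⊆ matSeq {r} E 2 := by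
    rw [hI2, hprog]
    intro f hf
    rcases hstep _ (subset_refl _) hf with h | ⟨j, hj, hjk, -, rfl⟩
    · exact Set.mem_union_right _ (hS1S2 h)
    · exact Set.mem_union_right _ ⟨n, j, le_refl n, hj, hjk, rfl⟩
  have hmat : mat {r} E =
      E ∪ { f | ∃ i j, i ≤ n ∧ 1 ≤ j ∧ j ≤ k ∧ f = mk2 pc (a i) (d j) } := by
    rw [mat_eq_of_fixed _ _ 2 hfix, hI2]
  have hdisj : ∀ f ∈ { f | ∃ i j, i ≤ n ∧ 1 ≤ j ∧ j ≤ k ∧ f = mk2 pc (a i) (d j) }, f ∉ E := by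
    rintro f ⟨i, j, hi, hj, hjk, rfl⟩ hfE
    rw [hPCE] at hfE
    rcases hfE with ⟨i', j', hi', hj', hjk', hbe, -⟩ | ⟨i', j', hi', hj', hjk', hbe, -⟩
    · exact hab i _ hi (hm i' j' hi' hj' hjk').1 (hm i' j' hi' hj' hjk').2 hbe
    · exact hac i _ hi (hm i' j' hi' hj' hjk').1 (hm i' j' hi' hj' hjk').2 hbe
  have hdiff : (E ∪ { f | ∃ i j, i ≤ n ∧ 1 ≤ j ∧ j ≤ k ∧ f = mk2 pc (a i) (d j) }) \ E =
      { f | ∃ i j, i ≤ n ∧ 1 ≤ j ∧ j ≤ k ∧ f = mk2 pc (a i) (d j) } := by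
    apply subset_antisymm
    · rintro f ⟨hf, hfE⟩
      rcases hf with h | h
      · exact absurd h hfE
      · exact h
    · intro f hf
      exact ⟨Set.mem_union_right _ hf, hdisj f hf⟩
  have hcard : ({ f | ∃ i j, i ≤ n ∧ 1 ≤ j ∧ j ≤ k ∧ f = mk2 pc (a i) (d j) } : Set Fact).ncard
      = n * k + k := by
    have hinjon : Set.InjOn (fun p : ℕ × ℕ => mk2 pc (a p.1) (d p.2))
        ↑(Finset.range (n + 1) ×ˢ Finset.Icc 1 k) := by
      rintro ⟨i, j⟩ hp ⟨i', j'⟩ hq h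
      simp only [Finset.coe_product, Set.mem_prod, Finset.mem_coe, Finset.mem_range,
        Finset.mem_Icc, Nat.lt_succ_iff] at hp hq
      obtain ⟨-, hai, hdj⟩ := mk2_eq_iff.mp h
      have h1 : i = i' := haa i i' hp.1 hq.1 hai
      have h2 : j = j' := hdd j j' hp.2.1 hp.2.2 hq.2.1 hq.2.2 hdj
      subst h1; subst h2; rfl
    have himg : { f | ∃ i j, i ≤ n ∧ 1 ≤ j ∧ j ≤ k ∧ f = mk2 pc (a i) (d j) } =
        ↑((Finset.range (n + 1) ×ˢ Finset.Icc 1 k).image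
          (fun p : ℕ × ℕ => mk2 pc (a p.1) (d p.2))) := by
      ext f
      simp only [Finset.coe_image, Set.mem_image, Finset.mem_coe, Finset.mem_product,
        Finset.mem_range, Finset.mem_Icc, Set.mem_setOf_eq, Nat.lt_succ_iff]
      constructor
      · rintro ⟨i, j, hi, hj, hjk, rfl⟩
        exact ⟨(i, j), ⟨hi, hj, hjk⟩, rfl⟩
      · rintro ⟨⟨i, j⟩, ⟨hi, hj, hjk⟩, rfl⟩
        exact ⟨i, j, hi, hj, hjk, rfl⟩
    rw [himg, Set.ncard_coe_finset, Finset.card_image_of_injOn hinjon, Finset.card_product,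
      Finset.card_range, Nat.card_Icc]
    simp only [Nat.add_sub_cancel]
    ring
  refine ⟨hmat, ?_, hI1, by rw [hI2, hmat]⟩
  rw [hmat, hdiff, hcard]



end Datalog
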